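/- arXiv:1606.01942 — 5 statements merged into one kernel-verified Lean document; each statement's English description precedes it below -/
import Mathlib

section
/- Let k be a field and n ≥ 0. In the quiver |P(n)| the following hold: (i) every vertex is the start of at most one arrow and the terminus of at most one arrow; (ii) every connected component contains exactly one vertex f with f = 0 or y ∤ f; (iii) the connected component of the vertex 0 consists of the single vertex 0 together with the single loop arrow 0 ∈ V_{n−1}; (iv) for every vertex f ≠ 0 with y ∤ f, setting d = max{ r ≥ 0 : x^r divides f }, the connected component of f is isomorphic as a quiver to the linear quiver A_{d+1}; its vertices are x^{−i} f y^i for 0 ≤ i ≤ d and its arrows are x^{−i−1} f y^i for 0 ≤ i ≤ d−1, the arrow x^{−i−1} f y^i going from x^{−i} f y^i to x^{−i−1} f y^{i+1}. -/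
/-- A quiver: vertex set `V`, arrow set `A`, start map `s`, terminus map `t`. -/
structure Quiv : Type 1 where
  V : Type
  A : Type
  s : A → V
  t : A → V

/-- Two quivers are isomorphic if there is a pair of bijections commuting with
start and terminus maps. -/
def Quiv.Iso (Γ Δ : Quiv) : Prop :=
  ∃ (φ₀ : Γ.V → Δ.V) (φ₁ : Γ.A → Δ.A),
    (∀ a, Δ.s (φ₁ a) = φ₀ (Γ.s a)) ∧ (∀ a, Δ.t (φ₁ a) = φ₀ (Γ.t a)) ∧
    Function.Bijective φ₀ ∧ Function.Bijective φ₁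

/-- The equivalence relation generated by `s a ~ t a`. -/
def Quiv.connRel (Γ : Quiv) : Γ.V → Γ.V → Prop :=
  Relation.EqvGen (fun u w => ∃ a, Γ.s a = u ∧ Γ.t a = w)

/-- The connected component of a vertex `v`: the full subquiver on all vertices
related to `v`, with all arrows whose start lies in it. -/
def Quiv.component (Γ : Quiv) (v : Γ.V) : Quiv where
  V := {u : Γ.V // Γ.connRel u v}
  A := {a : Γ.A // Γ.connRel (Γ.s a) v}
  s a := ⟨Γ.s a.1, a.2⟩
  t a := ⟨Γ.t a.1, Relation.EqvGen.trans _ _ _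
    (Relation.EqvGen.symm _ _ (Relation.EqvGen.rel _ _ ⟨a.1, rfl, rfl⟩)) a.2⟩

/-- `cyclicQuiv r` is the cyclic quiver `C_{r+1}`: vertices `0,…,r` and an arrow
`i → i+1 (mod r+1)` for each vertex `i`. -/
def cyclicQuiv (r : ℕ) : Quiv where
  V := Fin (r+1)
  A := Fin (r+1)
  s := id
  t := fun i => i + 1

/-- `linearQuiv r` is the linear quiver `A_{r+1}`: vertices `0,…,r` and arrows
`i → i+1` for `0 ≤ i < r`. -/
def linearQuiv (r : ℕ) : Quiv where
  V := Fin (r+1)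
  A := Fin r
  s := Fin.castSucc
  t := Fin.succ

open MvPolynomial

noncomputable section

/-- Polynomials in two variables `x = X 0`, `y = X 1`. -/
abbrev Poly2 (k : Type) [Field k] := MvPolynomial (Fin 2) k

/-- `Vd k n` is the space `V_n` of homogeneous polynomials of degree `n`. -/
abbrev Vd (k : Type) [Field k] (n : ℕ) : Submodule k (Poly2 k) :=
  homogeneousSubmodule (Fin 2) k n

/-- `Vm k n` is the space `V_{n-1}`, with `V_{-1} = 0`. -/
abbrev Vm (k : Type) [Field k] : ℕ → Submodule k (Poly2 k)
  | 0 => ⊥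
  | n+1 => Vd k n

theorem Vm_mul_mem (k : Type) [Field k] (n : ℕ) {c : Poly2 k} (hc : c.IsHomogeneous 1)
    {g : Poly2 k} (hg : g ∈ Vm k n) : c * g ∈ Vd k n := by
  cases n with
  | zero =>
      rw [Submodule.mem_bot] at hg
      subst hg
      rw [mul_zero]
      exact Submodule.zero_mem (Vd k 0)
  | succ m =>
      rw [mem_homogeneousSubmodule] at hg ⊢
      simpa [Nat.add_comm] using hc.mul hg

/-- Multiplication by the variable `X j`, as a linear map `V_{n-1} → V_n`. -/
def mulVar (k : Type) [Field k] (n : ℕ) (j : Fin 2) : Vm k n →ₗ[k] Vd k n where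
  toFun g := ⟨X j * g.1, Vm_mul_mem k n (isHomogeneous_X k j) g.2⟩
  map_add' a b := by ext; simp [mul_add]
  map_smul' c a := by ext; simp [mul_smul_comm]

/-- Multiplication by `x`. -/
def mulX (k : Type) [Field k] (n : ℕ) : Vm k n →ₗ[k] Vd k n := mulVar k n 0
/-- Multiplication by `y`. -/
def mulY (k : Type) [Field k] (n : ℕ) : Vm k n →ₗ[k] Vd k n := mulVar k n 1

end

noncomputable section
open MvPolynomial

/-- The quiver `|P(n)|`: vertices `V_n`, arrows `V_{n-1}`, start `g ↦ x·g`,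
terminus `g ↦ y·g`. -/
abbrev PQuiv (k : Type) [Field k] (n : ℕ) : Quiv where
  V := Vd k n
  A := Vm k n
  s := mulX k n
  t := mulY k n

/-! Since `x` and `y` are non-associated primes of `k[x,y]`, every nonzero `v` is uniquely
`y ^ b * w` with `y ∤ w`. The map `v ↦ x ^ b * w` takes the same value on `x * g` and `y * g`, and
`v` is joined to its image by the path `x ^ b w → x ^ (b-1) y w → ⋯ → y ^ b w`.
So the components of `|P(n)|` are the fibres of this map, and each fibre contains exactly one
vertex that is `0` or prime to `y`, namely its image. The fibre over `f = x ^ d * h` with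
`x, y ∤ h` is `{x ^ (d-i) * h * y ^ i | i ≤ d}`, and it is a chain rather than a cycle because its
last vertex `h * y ^ d` is not divisible by `x`, so it starts no arrow. -/

namespace MvPolynomial

variable {σ R : Type*}

attribute [local instance] gradedAlgebra in
theorem homogeneousComponent_add_mul [CommSemiring R] {φ : MvPolynomial σ R} {m : ℕ}
    (hφ : φ.IsHomogeneous m) (j : ℕ) (ψ : MvPolynomial σ R) :
    homogeneousComponent (m + j) (φ * ψ) = φ * homogeneousComponent j ψ := by
  have := DirectSum.coe_decompose_mul_add_of_left_mem (homogeneousSubmodule σ R) (b := ψ) (j := j)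
    ((mem_homogeneousSubmodule m φ).mpr hφ)
  rwa [← decomposition.decompose'_apply, ← decomposition.decompose'_apply]

variable [CommRing R] [IsDomain R] {φ ψ : MvPolynomial σ R} {m n : ℕ}

theorem IsHomogeneous.of_mul_left (hφ : φ.IsHomogeneous m) (hφ0 : φ ≠ 0) (hψ0 : ψ ≠ 0)
    (h : (φ * ψ).IsHomogeneous n) : ∃ j, m + j = n ∧ ψ.IsHomogeneous j := by
  have hdeg : ∀ d, coeff d ψ ≠ 0 → m + d.degree = n := by
    intro d hd
    by_contra hne
    have hcomp := homogeneousComponent_add_mul hφ d.degree ψ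
    rw [homogeneousComponent_of_mem ((mem_homogeneousSubmodule n _).mpr h), if_neg hne] at hcomp
    have hψd : homogeneousComponent d.degree ψ = 0 :=
      (mul_eq_zero.mp hcomp.symm).resolve_left hφ0
    have := congrArg (coeff d) hψd
    rw [coeff_homogeneousComponent, if_pos rfl, coeff_zero] at this
    exact hd this
  obtain ⟨d, hd⟩ := ne_zero_iff.mp hψ0
  refine ⟨d.degree, hdeg d hd, fun e he => ?_⟩
  have := hdeg e he
  have := hdeg d hd
  calc Finsupp.weight 1 e = e.degree := by rw [Finsupp.degree_eq_weight_one]; rfl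
    _ = d.degree := by omega

theorem isHomogeneous_X_pow_mul_iff (i j : σ) (b : ℕ) :
    (X i ^ b * ψ).IsHomogeneous n ↔ (X j ^ b * ψ).IsHomogeneous n := by
  suffices ∀ i j : σ, (X i ^ b * ψ).IsHomogeneous n → (X j ^ b * ψ).IsHomogeneous n from
    ⟨this i j, this j i⟩
  intro i j h
  rcases eq_or_ne ψ 0 with rfl | hψ0
  · simpa using h
  obtain ⟨e, rfl, he⟩ := (isHomogeneous_X_pow i b).of_mul_left (pow_ne_zero _ (X_ne_zero i)) hψ0 h
  exact (isHomogeneous_X_pow j b).mul he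

end MvPolynomial

section ReplacePow

variable {α : Type*}

/-- `replacePow y x v` replaces the largest power `y ^ b` dividing `v` by `x ^ b`
(for `v = 0` the multiplicity is a junk value, but the result is still `0`). -/
noncomputable def replacePow [Monoid α] (y x v : α) : α :=
  x ^ multiplicity y v * (pow_multiplicity_dvd y v).choose

variable [CommMonoidWithZero α] {p x y h : α}

theorem Prime.not_dvd_pow_mul (hp : Prime p) {q r : α} (hq : ¬p ∣ q) (hr : ¬p ∣ r) (m : ℕ) :
    ¬p ∣ q ^ m * r :=
  hp.not_dvd_mul (fun hdvd => hq (hp.dvd_of_dvd_pow hdvd)) hr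

variable [IsCancelMulZero α]

theorem Prime.pow_mul_eq_pow_mul_of_not_dvd (hp : Prime p) {a b : ℕ} {c d : α}
    (hc : ¬p ∣ c) (hd : ¬p ∣ d) (heq : p ^ a * c = p ^ b * d) : a = b ∧ c = d := by
  wlog hab : a ≤ b generalizing a b c d
  · obtain ⟨hba, hdc⟩ := this hd hc heq.symm (by omega)
    exact ⟨hba.symm, hdc.symm⟩
  obtain ⟨t, rfl⟩ := Nat.exists_eq_add_of_le hab
  rw [pow_add, mul_assoc] at heq
  have hcd := mul_left_cancel₀ (pow_ne_zero a hp.ne_zero) heq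
  cases t with
  | zero => simpa using hcd
  | succ t => exact absurd (hcd ▸ (dvd_pow_self p t.succ_ne_zero).mul_right d) hc

theorem eq_of_pow_sub_mul_mul_pow_eq (hy : Prime y) (hxy : ¬y ∣ x) (hyh : ¬y ∣ h) {d i j : ℕ}
    (hij : x ^ (d - i) * h * y ^ i = x ^ (d - j) * h * y ^ j) : i = j := by
  rw [mul_comm _ (y ^ i), mul_comm _ (y ^ j)] at hij
  exact (hy.pow_mul_eq_pow_mul_of_not_dvd (hy.not_dvd_pow_mul hxy hyh _)
    (hy.not_dvd_pow_mul hxy hyh _) hij).1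

theorem replacePow_pow_mul (hy : Prime y) {w : α} (hw : ¬y ∣ w) (b : ℕ) :
    replacePow y x (y ^ b * w) = x ^ b * w := by
  have hmult : multiplicity y (y ^ b * w) = b := by
    refine multiplicity_eq_of_dvd_of_not_dvd (dvd_mul_right _ _) fun hdvd => hw ?_
    rw [pow_succ] at hdvd
    exact (mul_dvd_mul_iff_left (pow_ne_zero b hy.ne_zero)).mp hdvd
  have hspec := (pow_multiplicity_dvd y (y ^ b * w)).choose_spec
  rw [replacePow]
  generalize (pow_multiplicity_dvd y (y ^ b * w)).choose = c at hspec ⊢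
  rw [hmult] at hspec ⊢
  rw [mul_left_cancel₀ (pow_ne_zero b hy.ne_zero) hspec]

theorem replacePow_zero (hy : y ≠ 0) : replacePow y x 0 = 0 := by
  have hspec := (pow_multiplicity_dvd y (0 : α)).choose_spec
  rw [replacePow, ((mul_eq_zero.mp hspec.symm).resolve_left (pow_ne_zero _ hy)), mul_zero]

theorem replacePow_eq_self (hy : Prime y) {v : α} (hv : v = 0 ∨ ¬y ∣ v) :
    replacePow y x v = v := by
  rcases hv with rfl | hv
  · exact replacePow_zero hy.ne_zero
  · simpa using replacePow_pow_mul (x := x) hy hv 0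

variable [WfDvdMonoid α]

theorem eq_zero_or_exists_eq_pow_mul (hy : Prime y) (v : α) :
    v = 0 ∨ ∃ b w, ¬y ∣ w ∧ v = y ^ b * w := by
  rcases eq_or_ne v 0 with hv | hv
  · exact .inl hv
  · exact .inr (WfDvdMonoid.max_power_factor hv hy.irreducible)

theorem replacePow_mul_eq (hy : Prime y) (hxy : ¬y ∣ x) (g : α) :
    replacePow y x (y * g) = replacePow y x (x * g) := by
  rcases eq_zero_or_exists_eq_pow_mul hy g with rfl | ⟨b, w, hw, rfl⟩
  · simp only [mul_zero]
  rw [← mul_assoc, ← pow_succ', mul_left_comm, replacePow_pow_mul hy hw,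
    replacePow_pow_mul hy (hy.not_dvd_mul hxy hw), pow_succ, mul_assoc]

theorem replacePow_eq_zero_or_not_dvd (hy : Prime y) (hxy : ¬y ∣ x) (v : α) :
    replacePow y x v = 0 ∨ ¬y ∣ replacePow y x v := by
  rcases eq_zero_or_exists_eq_pow_mul hy v with rfl | ⟨b, w, hw, rfl⟩
  · exact .inl (replacePow_zero hy.ne_zero)
  · rw [replacePow_pow_mul hy hw]
    exact .inr (hy.not_dvd_pow_mul hxy hw b)

theorem replacePow_eq_zero_iff (hy : Prime y) (hxy : ¬y ∣ x) {v : α} :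
    replacePow y x v = 0 ↔ v = 0 := by
  refine ⟨fun h => ?_, by rintro rfl; exact replacePow_zero hy.ne_zero⟩
  rcases eq_zero_or_exists_eq_pow_mul hy v with rfl | ⟨b, w, hw, rfl⟩
  · rfl
  have hx0 : x ≠ 0 := fun hx => hxy (hx ▸ dvd_zero y)
  rw [replacePow_pow_mul hy hw] at h
  exact absurd h (mul_ne_zero (pow_ne_zero b hx0) fun hw0 => hw (hw0 ▸ dvd_zero y))

theorem replacePow_eq_pow_mul_iff (hx : Prime x) (hy : Prime y) (hxy : ¬y ∣ x)
    (hxh : ¬x ∣ h) (hyh : ¬y ∣ h) {d : ℕ} {v : α} :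
    replacePow y x v = x ^ d * h ↔ ∃ i ≤ d, v = x ^ (d - i) * h * y ^ i := by
  constructor
  · intro hv
    rcases eq_zero_or_exists_eq_pow_mul hy v with rfl | ⟨b, w, hw, rfl⟩
    · rw [replacePow_zero hy.ne_zero] at hv
      exact absurd hv.symm (mul_ne_zero (pow_ne_zero d hx.ne_zero) fun h0 => hxh (h0 ▸ dvd_zero x))
    rw [replacePow_pow_mul hy hw] at hv
    rcases eq_zero_or_exists_eq_pow_mul hx w with rfl | ⟨a, u, hu, rfl⟩
    · exact absurd (dvd_zero y) hw
    rw [← mul_assoc, ← pow_add] at hv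
    obtain ⟨had, rfl⟩ := hx.pow_mul_eq_pow_mul_of_not_dvd hu hxh hv
    exact ⟨b, by omega, by rw [show d - b = a by omega, mul_comm]⟩
  · rintro ⟨i, hi, rfl⟩
    rw [mul_comm, replacePow_pow_mul hy (hy.not_dvd_pow_mul hxy hyh _), ← mul_assoc, ← pow_add,
      Nat.add_sub_cancel' hi]

end ReplacePow

namespace Quiv

variable (Γ : Quiv)

theorem connRel_iff_of_invariant {ρ : Γ.V → Γ.V} (hρ : ∀ a, ρ (Γ.s a) = ρ (Γ.t a))
    (hconn : ∀ v, Γ.connRel v (ρ v)) {u w : Γ.V} : Γ.connRel u w ↔ ρ u = ρ w := by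
  refine ⟨fun h => ?_, fun h => .trans _ _ _ (hconn u) (h ▸ .symm _ _ (hconn w))⟩
  induction h with
  | rel u w huw => obtain ⟨a, rfl, rfl⟩ := huw; exact hρ a
  | refl => rfl
  | symm _ _ _ ih => exact ih.symm
  | trans _ _ _ _ _ ih₁ ih₂ => exact ih₁.trans ih₂

theorem exists_linearQuiv_iso_component (hs : Function.Injective Γ.s) (v : Γ.V) {d : ℕ}
    (f₀ : Fin (d + 1) → Γ.V) (f₁ : Fin d → Γ.A) (hf₀ : Function.Injective f₀)
    (hcomp : ∀ u, Γ.connRel u v ↔ ∃ i, f₀ i = u)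
    (hsf : ∀ i, Γ.s (f₁ i) = f₀ i.castSucc) (htf : ∀ i, Γ.t (f₁ i) = f₀ i.succ)
    (hlast : ∀ a, Γ.s a ≠ f₀ (Fin.last d)) :
    ∃ (φ₀ : (linearQuiv d).V → (Γ.component v).V) (φ₁ : (linearQuiv d).A → (Γ.component v).A),
      Function.Bijective φ₀ ∧ Function.Bijective φ₁ ∧
      (∀ a, (Γ.component v).s (φ₁ a) = φ₀ ((linearQuiv d).s a)) ∧
      (∀ a, (Γ.component v).t (φ₁ a) = φ₀ ((linearQuiv d).t a)) ∧
      (∀ i, (φ₀ i).1 = f₀ i) ∧ (∀ i, (φ₁ i).1 = f₁ i) := by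
  refine ⟨fun i => ⟨f₀ i, (hcomp _).2 ⟨i, rfl⟩⟩,
    fun i => ⟨f₁ i, (hcomp _).2 ⟨i.castSucc, (hsf i).symm⟩⟩,
    ⟨fun i j hij => hf₀ (congrArg Subtype.val hij), fun u => ?_⟩,
    ⟨fun (i j : Fin d) hij => ?_, fun a => ?_⟩,
    fun a => Subtype.ext (hsf a), fun a => Subtype.ext (htf a), fun _ => rfl, fun _ => rfl⟩
  · obtain ⟨i, hi⟩ := (hcomp u.1).1 u.2
    exact ⟨i, Subtype.ext hi⟩
  · have hsij : Γ.s (f₁ i) = Γ.s (f₁ j) := congrArg (fun b => Γ.s b.1) hij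
    rw [hsf, hsf] at hsij
    exact Fin.castSucc_injective d (hf₀ hsij)
  · obtain ⟨i, hi⟩ := (hcomp _).1 a.2
    obtain ⟨j, rfl⟩ := Fin.exists_castSucc_eq.mpr fun h => hlast a.1 (h ▸ hi.symm)
    exact ⟨j, Subtype.ext (hs ((hsf j).trans hi))⟩

end Quiv

namespace Poly2

variable {k : Type} [Field k]

theorem prime_X (j : Fin 2) : Prime (X j : Poly2 k) := X_prime

theorem not_X_one_dvd_X_zero : ¬(X 1 : Poly2 k) ∣ X 0 := by simp [X_dvd_X]

theorem not_X_zero_dvd_X_one : ¬(X 0 : Poly2 k) ∣ X 1 := by simp [X_dvd_X]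

end Poly2

section Vd

open Poly2

variable {k : Type} [Field k] {n : ℕ}

theorem mulVar_injective (j : Fin 2) : Function.Injective (mulVar k n j) :=
  fun _ _ h => Subtype.ext (mul_left_cancel₀ (X_ne_zero j) (congrArg Subtype.val h))

theorem mem_Vm_of_X_mul_mem {g : Poly2 k} (j : Fin 2) (hg : X j * g ∈ Vd k n) : g ∈ Vm k n := by
  rcases eq_or_ne g 0 with rfl | hg0
  · exact zero_mem _
  obtain ⟨m, rfl, hm⟩ := (isHomogeneous_X k j).of_mul_left (X_ne_zero j) hg0
    ((mem_homogeneousSubmodule _ _).mp hg)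
  rw [add_comm]
  exact (mem_homogeneousSubmodule _ _).mpr hm

theorem replacePow_mem_Vd {v : Poly2 k} (hv : v ∈ Vd k n) :
    replacePow (X 1) (X 0) v ∈ Vd k n := by
  rcases eq_zero_or_exists_eq_pow_mul (prime_X 1) v with rfl | ⟨b, w, hw, rfl⟩
  · rw [replacePow_zero (X_ne_zero 1)]
    exact zero_mem _
  · rw [replacePow_pow_mul (prime_X 1) hw, mem_homogeneousSubmodule,
      isHomogeneous_X_pow_mul_iff 0 1]
    exact (mem_homogeneousSubmodule _ _).mp hv

theorem X_pow_sub_mul_mul_X_pow_mem_Vd {h : Poly2 k} {d i : ℕ} (hf : X 0 ^ d * h ∈ Vd k n)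
    (hi : i ≤ d) : X 0 ^ (d - i) * h * X 1 ^ i ∈ Vd k n := by
  rw [← Nat.add_sub_cancel' hi, pow_add, mul_assoc, mem_homogeneousSubmodule,
    isHomogeneous_X_pow_mul_iff 0 1, ← mem_homogeneousSubmodule] at hf
  rwa [mul_comm] at hf

end Vd

namespace PQuiv

open Poly2

variable {k : Type} [Field k] {n : ℕ}

def root (v : (PQuiv k n).V) : (PQuiv k n).V :=
  ⟨replacePow (X 1) (X 0) v, replacePow_mem_Vd v.2⟩

theorem root_s (a : (PQuiv k n).A) : root ((PQuiv k n).s a) = root ((PQuiv k n).t a) :=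
  Subtype.ext (replacePow_mul_eq (prime_X 1) not_X_one_dvd_X_zero a.1).symm

theorem root_eq_self {v : (PQuiv k n).V} (hv : (v : Poly2 k) = 0 ∨ ¬X 1 ∣ (v : Poly2 k)) :
    root v = v :=
  Subtype.ext (replacePow_eq_self (prime_X 1) hv)

theorem connRel_X_one_pow_mul_X_zero_pow_mul (b : ℕ) {w : Poly2 k} (hw : ¬X 1 ∣ w)
    {u u' : (PQuiv k n).V} (hu : (u : Poly2 k) = X 1 ^ b * w) (hu' : (u' : Poly2 k) = X 0 ^ b * w) :
    (PQuiv k n).connRel u u' := by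
  induction b generalizing w u with
  | zero =>
    rw [Subtype.ext (hu.trans hu'.symm)]
    exact .refl _
  | succ b ih =>
    have hg : X 1 * (X 1 ^ b * w) ∈ Vd k n := by rw [← mul_assoc, ← pow_succ', ← hu]; exact u.2
    let g : (PQuiv k n).A := ⟨_, mem_Vm_of_X_mul_mem 1 hg⟩
    have htg : (PQuiv k n).t g = u := Subtype.ext (by rw [hu, pow_succ', mul_assoc]; rfl)
    have hug : (PQuiv k n).connRel u ((PQuiv k n).s g) :=
      htg ▸ Relation.EqvGen.symm _ _ (Relation.EqvGen.rel _ _ ⟨g, rfl, rfl⟩)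
    refine .trans _ _ _ hug (ih ((prime_X 1).not_dvd_mul not_X_one_dvd_X_zero hw) ?_ ?_)
    · show X 0 * (X 1 ^ b * w) = _
      rw [mul_left_comm]
    · rw [hu', pow_succ, mul_assoc]

theorem connRel_root (v : (PQuiv k n).V) : (PQuiv k n).connRel v (root v) := by
  rcases eq_zero_or_exists_eq_pow_mul (prime_X 1) v.1 with hv | ⟨b, w, hw, hv⟩
  · rw [root_eq_self (.inl hv)]
    exact .refl _
  · exact connRel_X_one_pow_mul_X_zero_pow_mul b hw hv
      (by simp only [root, hv, replacePow_pow_mul (prime_X 1) hw])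

theorem connRel_iff_root_eq {u w : (PQuiv k n).V} :
    (PQuiv k n).connRel u w ↔ root u = root w :=
  Quiv.connRel_iff_of_invariant _ root_s connRel_root

theorem connRel_zero_iff {u : (PQuiv k n).V} : (PQuiv k n).connRel u 0 ↔ u = 0 := by
  rw [connRel_iff_root_eq, root_eq_self (v := 0) (.inl rfl), Subtype.ext_iff, Subtype.ext_iff]
  exact replacePow_eq_zero_iff (prime_X 1) not_X_one_dvd_X_zero

theorem connRel_iff_exists_eq (f : (PQuiv k n).V) {h : Poly2 k} {d : ℕ}
    (hfh : (f : Poly2 k) = X 0 ^ d * h) (hxh : ¬X 0 ∣ h) (hyh : ¬X 1 ∣ h) {u : (PQuiv k n).V} :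
    (PQuiv k n).connRel u f ↔ ∃ i ≤ d, (u : Poly2 k) = X 0 ^ (d - i) * h * X 1 ^ i := by
  have hfy : ¬X 1 ∣ (f : Poly2 k) := hfh ▸ (prime_X 1).not_dvd_pow_mul not_X_one_dvd_X_zero hyh d
  rw [connRel_iff_root_eq, root_eq_self (v := f) (.inr hfy), Subtype.ext_iff, hfh]
  exact replacePow_eq_pow_mul_iff (prime_X 0) (prime_X 1) not_X_one_dvd_X_zero hxh hyh

theorem exists_linearQuiv_iso_component (f : (PQuiv k n).V) {h : Poly2 k} {d : ℕ}
    (hfh : (f : Poly2 k) = X 0 ^ d * h) (hxh : ¬X 0 ∣ h) (hyh : ¬X 1 ∣ h) :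
    ∃ (φ₀ : (linearQuiv d).V → ((PQuiv k n).component f).V)
      (φ₁ : (linearQuiv d).A → ((PQuiv k n).component f).A),
      Function.Bijective φ₀ ∧ Function.Bijective φ₁ ∧
      (∀ a, ((PQuiv k n).component f).s (φ₁ a) = φ₀ ((linearQuiv d).s a)) ∧
      (∀ a, ((PQuiv k n).component f).t (φ₁ a) = φ₀ ((linearQuiv d).t a)) ∧
      (∀ i : Fin (d + 1), ((φ₀ i).1 : Poly2 k) = X 0 ^ (d - i.1) * h * X 1 ^ i.1) ∧
      (∀ i : Fin d, ((φ₁ i).1 : Poly2 k) = X 0 ^ (d - 1 - i.1) * h * X 1 ^ i.1) := by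
  let f₀ (i : Fin (d + 1)) : (PQuiv k n).V :=
    ⟨_, X_pow_sub_mul_mul_X_pow_mem_Vd (hfh ▸ f.2) (Nat.lt_succ_iff.mp i.2)⟩
  have hsf₀ (i : Fin d) :
      X 0 * (X 0 ^ (d - 1 - i.1) * h * X 1 ^ i.1) = (f₀ i.castSucc : Poly2 k) := by
    show _ = X 0 ^ (d - i.1) * h * X 1 ^ i.1
    rw [show d - i.1 = d - 1 - i.1 + 1 by omega, pow_succ']
    ring
  let f₁ (i : Fin d) : (PQuiv k n).A := ⟨_, mem_Vm_of_X_mul_mem 0 ((hsf₀ i).symm ▸ (f₀ _).2)⟩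
  have htf₁ (i : Fin d) : (PQuiv k n).t (f₁ i) = f₀ i.succ := by
    refine Subtype.ext ?_
    show X 1 * (X 0 ^ (d - 1 - i.1) * h * X 1 ^ i.1) = X 0 ^ (d - (i.1 + 1)) * h * X 1 ^ (i.1 + 1)
    rw [show d - (i.1 + 1) = d - 1 - i.1 by omega, pow_succ']
    ring
  have hinj : Function.Injective f₀ := fun i j hij =>
    Fin.ext (eq_of_pow_sub_mul_mul_pow_eq (prime_X 1) not_X_one_dvd_X_zero hyh
      (congrArg Subtype.val hij))
  have hcomp (u : (PQuiv k n).V) : (PQuiv k n).connRel u f ↔ ∃ i, f₀ i = u := by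
    rw [connRel_iff_exists_eq f hfh hxh hyh]
    constructor
    · rintro ⟨i, hi, hu⟩
      exact ⟨⟨i, Nat.lt_succ_of_le hi⟩, Subtype.ext hu.symm⟩
    · rintro ⟨i, rfl⟩
      exact ⟨i, Nat.lt_succ_iff.mp i.2, rfl⟩
  have hlast (a : (PQuiv k n).A) : (PQuiv k n).s a ≠ f₀ (Fin.last d) := by
    intro ha
    have hxa : X 0 * a.1 = X 0 ^ (d - d) * h * X 1 ^ d := congrArg Subtype.val ha
    rw [Nat.sub_self, pow_zero, one_mul, mul_comm h] at hxa
    exact (prime_X 0).not_dvd_pow_mul not_X_zero_dvd_X_one hxh d ⟨a.1, hxa.symm⟩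
  obtain ⟨φ₀, φ₁, h₀, h₁, hs, ht, hφ₀, hφ₁⟩ := Quiv.exists_linearQuiv_iso_component _
    (mulVar_injective 0) f f₀ f₁ hinj hcomp (fun i => Subtype.ext (hsf₀ i)) htf₁ hlast
  exact ⟨φ₀, φ₁, h₀, h₁, hs, ht, fun i => congrArg Subtype.val (hφ₀ i),
    fun i => congrArg Subtype.val (hφ₁ i)⟩

end PQuiv

/-- STATEMENT 1, parts (i)-(iv). In part (iv) the isomorphism with the linear
quiver `A_{d+1}` is given explicitly: the vertex `i` corresponds to
`x^{d-i}·h·y^i = x^{-i}·f·y^i` and the arrow `i` (from `i` to `i+1`) corresponds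
to `x^{d-1-i}·h·y^i = x^{-i-1}·f·y^i`, where `h = x^{-d}·f`. -/
theorem stmt1 (k : Type) [Field k] (n : ℕ) :
    -- (i) every vertex is the start of at most one arrow and the terminus of
    -- at most one arrow
    (Function.Injective (PQuiv k n).s ∧ Function.Injective (PQuiv k n).t) ∧
    -- (ii) every connected component contains exactly one vertex `f` with
    -- `f = 0` or `y ∤ f`
    (∀ v : (PQuiv k n).V, ∃! f : (PQuiv k n).V,
        (PQuiv k n).connRel f v ∧
          ((f : Poly2 k) = 0 ∨ ¬ (X 1 : Poly2 k) ∣ (f : Poly2 k))) ∧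
    -- (iii) the connected component of `0` consists of the single vertex `0`
    -- together with the single (loop) arrow `0 ∈ V_{n-1}`
    ({u : (PQuiv k n).V | (PQuiv k n).connRel u 0} = {0} ∧
     {a : (PQuiv k n).A | (PQuiv k n).connRel ((PQuiv k n).s a) 0} = {0} ∧
     (PQuiv k n).s 0 = 0 ∧ (PQuiv k n).t 0 = 0) ∧
    -- (iv) for `f ≠ 0` with `y ∤ f` and `d = max {r | x^r ∣ f}`, the connected
    -- component of `f` is isomorphic to the linear quiver `A_{d+1}`, with the
    -- explicit vertices and arrows described above
    (∀ f : (PQuiv k n).V, (f : Poly2 k) ≠ 0 → ¬ (X 1 : Poly2 k) ∣ (f : Poly2 k) →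
      ∀ d : ℕ, ((X 0 : Poly2 k) ^ d ∣ (f : Poly2 k) ∧
          ¬ (X 0 : Poly2 k) ^ (d+1) ∣ (f : Poly2 k)) →
      ∃ h : Poly2 k, (f : Poly2 k) = (X 0) ^ d * h ∧
        ∃ (φ₀ : (linearQuiv d).V → ((PQuiv k n).component f).V)
          (φ₁ : (linearQuiv d).A → ((PQuiv k n).component f).A),
          Function.Bijective φ₀ ∧ Function.Bijective φ₁ ∧
          (∀ a, ((PQuiv k n).component f).s (φ₁ a) = φ₀ ((linearQuiv d).s a)) ∧
          (∀ a, ((PQuiv k n).component f).t (φ₁ a) = φ₀ ((linearQuiv d).t a)) ∧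
          (∀ i : Fin (d+1),
            (((φ₀ i).1 : Poly2 k)) = (X 0) ^ (d - i.1) * h * (X 1) ^ i.1) ∧
          (∀ i : Fin d,
            (((φ₁ i).1 : Poly2 k)) = (X 0) ^ (d - 1 - i.1) * h * (X 1) ^ i.1)) := by
  refine ⟨⟨mulVar_injective 0, mulVar_injective 1⟩, fun v => ?_,
    ⟨?_, ?_, map_zero _, map_zero _⟩, fun f _ hfy d ⟨⟨h, hfh⟩, hmax⟩ => ⟨h, hfh, ?_⟩⟩
  · refine ⟨PQuiv.root v, ⟨.symm _ _ (PQuiv.connRel_root v),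
      replacePow_eq_zero_or_not_dvd (Poly2.prime_X 1) Poly2.not_X_one_dvd_X_zero _⟩, ?_⟩
    rintro g ⟨hgv, hg⟩
    rw [← PQuiv.root_eq_self hg]
    exact PQuiv.connRel_iff_root_eq.mp hgv
  · ext u
    exact PQuiv.connRel_zero_iff
  · ext a
    exact PQuiv.connRel_zero_iff.trans ((mulVar_injective 0).eq_iff' (map_zero _))
  · refine PQuiv.exists_linearQuiv_iso_component f hfh ?_ ?_
    · rintro ⟨c, rfl⟩
      exact hmax ⟨c, by rw [hfh, pow_succ, mul_assoc]⟩
    · exact fun hyh => hfy (hfh ▸ dvd_mul_of_dvd_right hyh _)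
end
end

section
/- Let k be a field and n ≥ 0. The quiver |I(n)|, with vertex set the dual space V_{n−1}* = Hom_k(V_{n−1}, k), arrow set V_n* = Hom_k(V_n, k), start map φ ↦ φ ∘ (multiplication by x) and terminus map φ ↦ φ ∘ (multiplication by y) (the duals of the multiplication maps V_{n−1} → V_n), is isomorphic, as a quiver, to the de Bruijn quiver of dimension n on the set k: its vertex set is k^n, its arrow set is k^{n+1}, and the arrow (a₀,a₁,…,aₙ) has start (a₀,…,a_{n−1}) and terminus (a₁,…,aₙ). -/
open MvPolynomial

noncomputable section
open MvPolynomial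

/-- The quiver `|I(n)|`: vertices `V_{n-1}* `, arrows `V_n*`, start
`φ ↦ φ ∘ (mult. by x)`, terminus `φ ↦ φ ∘ (mult. by y)`. -/
abbrev IQuiv (k : Type) [Field k] (n : ℕ) : Quiv where
  V := Module.Dual k (Vm k n)
  A := Module.Dual k (Vd k n)
  s := (mulX k n).dualMap
  t := (mulY k n).dualMap

/-- The de Bruijn quiver of dimension `n` on a set `A`: vertices `A^n`, arrows
`A^{n+1}`; the arrow `(a₀,…,aₙ)` starts at `(a₀,…,a_{n-1})` and ends at
`(a₁,…,aₙ)`. -/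
def deBruijn (A : Type) (n : ℕ) : Quiv where
  V := Fin n → A
  A := Fin (n+1) → A
  s a := a ∘ Fin.castSucc
  t a := a ∘ Fin.succ

open Module

theorem Quiv.iso_of_basis {R V A ι ι' : Type} [CommSemiring R] [AddCommMonoid V]
    [AddCommMonoid A] [Module R V] [Module R A] (bV : Basis ι R V) (bA : Basis ι' R A)
    (f g : V →ₗ[R] A) (σ τ : ι → ι') (hf : ∀ i, f (bV i) = bA (σ i))
    (hg : ∀ i, g (bV i) = bA (τ i)) :
    Quiv.Iso ⟨Dual R V, Dual R A, f.dualMap, g.dualMap⟩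
      ⟨ι → R, ι' → R, fun a => a ∘ σ, fun a => a ∘ τ⟩ :=
  ⟨(bV.constr R).symm, (bA.constr R).symm,
    fun ψ => funext fun i => by simp [hf], fun ψ => funext fun i => by simp [hg],
    (bV.constr R).symm.bijective, (bA.constr R).symm.bijective⟩

lemma Finsupp.degree_fin_two (d : Fin 2 →₀ ℕ) : d.degree = d 0 + d 1 := by
  rw [Finsupp.degree_eq_sum, Fin.sum_univ_two]

/-- The exponent of `x ^ (n - i) * y ^ i`. -/
def monomialExp (n : ℕ) (i : Fin (n + 1)) : Fin 2 →₀ ℕ :=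
  Finsupp.single 0 (n - i : ℕ) + Finsupp.single 1 (i : ℕ)

@[simp]
lemma monomialExp_apply_zero (n : ℕ) (i : Fin (n + 1)) : monomialExp n i 0 = n - i := by
  simp [monomialExp]

@[simp]
lemma monomialExp_apply_one (n : ℕ) (i : Fin (n + 1)) : monomialExp n i 1 = i := by
  simp [monomialExp]

lemma monomialExp_injective (n : ℕ) : Function.Injective (monomialExp n) :=
  fun i j h => Fin.ext (by simpa using congr($h 1))

lemma range_monomialExp (n : ℕ) : Set.range (monomialExp n) = {d | d.degree = n} := by
  ext d
  simp only [Set.mem_range, Set.mem_ofPred_eq, Finsupp.degree_fin_two]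
  constructor
  · rintro ⟨i, rfl⟩
    simp [Nat.sub_add_cancel (Fin.is_le i)]
  · intro hd
    refine ⟨⟨d 1, by omega⟩, ?_⟩
    simp only [Finsupp.ext_iff, Fin.forall_fin_two, monomialExp_apply_zero, monomialExp_apply_one,
      and_true]
    omega

lemma single_zero_add_monomialExp (m : ℕ) (j : Fin (m + 1)) :
    Finsupp.single 0 1 + monomialExp m j = monomialExp (m + 1) j.castSucc := by
  simp only [Finsupp.ext_iff, Fin.forall_fin_two, Finsupp.coe_add, Pi.add_apply,
    Finsupp.single_eq_same, Finsupp.single_eq_of_ne one_ne_zero, monomialExp_apply_zero,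
    monomialExp_apply_one, Fin.val_castSucc]
  omega

lemma single_one_add_monomialExp (m : ℕ) (j : Fin (m + 1)) :
    Finsupp.single 1 1 + monomialExp m j = monomialExp (m + 1) j.succ := by
  simp only [Finsupp.ext_iff, Fin.forall_fin_two, Finsupp.coe_add, Pi.add_apply,
    Finsupp.single_eq_same, Finsupp.single_eq_of_ne zero_ne_one, monomialExp_apply_zero,
    monomialExp_apply_one, Fin.val_succ]
  omega

section

variable (k : Type) [Field k]

lemma linearIndependent_monomial_monomialExp (n : ℕ) :
    LinearIndependent k fun i => (monomial (monomialExp n i) 1 : Poly2 k) := by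
  simpa [Function.comp_def] using
    (basisMonomials (Fin 2) k).linearIndependent.comp _ (monomialExp_injective n)

lemma Vd_eq_span_monomial (n : ℕ) :
    Vd k n = Submodule.span k (Set.range fun i => (monomial (monomialExp n i) 1 : Poly2 k)) := by
  rw [Vd, homogeneousSubmodule_eq_finsupp_supported, ← restrictSupport, restrictSupport_eq_span,
    ← range_monomialExp, ← Set.range_comp]
  rfl

def monomialBasis (n : ℕ) : Basis (Fin (n + 1)) k (Vd k n) :=
  (Basis.span (linearIndependent_monomial_monomialExp k n)).map
    (LinearEquiv.ofEq _ _ (Vd_eq_span_monomial k n).symm)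

@[simp]
lemma coe_monomialBasis (n : ℕ) (i : Fin (n + 1)) :
    (monomialBasis k n i : Poly2 k) = monomial (monomialExp n i) 1 := by
  simp [monomialBasis, Basis.span_apply]

def vmBasis : (n : ℕ) → Basis (Fin n) k (Vm k n)
  | 0 => Basis.empty _
  | m + 1 => monomialBasis k m

lemma mulX_vmBasis (n : ℕ) (i : Fin n) :
    mulX k n (vmBasis k n i) = monomialBasis k n i.castSucc := by
  cases n with
  | zero => exact i.elim0
  | succ m =>
    ext1
    simp [mulX, mulVar, vmBasis, X, monomial_mul, single_zero_add_monomialExp]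

lemma mulY_vmBasis (n : ℕ) (i : Fin n) :
    mulY k n (vmBasis k n i) = monomialBasis k n i.succ := by
  cases n with
  | zero => exact i.elim0
  | succ m =>
    ext1
    simp [mulY, mulVar, vmBasis, X, monomial_mul, single_one_add_monomialExp]

end

/-- `|I(n)|` is isomorphic, as a quiver, to the de Bruijn quiver
of dimension `n` on the set `k`. -/
theorem stmt3 (k : Type) [Field k] (n : ℕ) :
    Quiv.Iso (IQuiv k n) (deBruijn k n) :=
  Quiv.iso_of_basis (vmBasis k n) (monomialBasis k n) (mulX k n) (mulY k n) Fin.castSucc Fin.succ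
    (mulX_vmBasis k n) (mulY_vmBasis k n)

end
end

section
/- Let k be a field and n ≥ 1. The Kronecker representation k^{(C_n)} given by the pair of linear maps k^n → k^n consisting of the identity and the cyclic shift σ (σ(e_i) = e_{i+1} for 1 ≤ i ≤ n−1 and σ(e_n) = e_1) is isomorphic as a Kronecker representation to the regular representation R(y^n − x^n) = (V_{n−1} ⇉ V_n/⟨y^n − x^n⟩; g ↦ x·g + ⟨y^n − x^n⟩, g ↦ y·g + ⟨y^n − x^n⟩). -/
open MvPolynomial

noncomputable section
open MvPolynomial

/-- The vertex space of `|R(f)|`: the quotient `V_n/⟨f⟩` by the line spanned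
by `f`. -/
abbrev RV (k : Type) [Field k] (n : ℕ) (f : Vd k n) : Type :=
  (Vd k n) ⧸ (k ∙ f)

/-- The map `V_{n-1} → V_n/⟨f⟩`, `g ↦ x·g + ⟨f⟩`. -/
def Ru (k : Type) [Field k] (n : ℕ) (f : Vd k n) : Vm k n →ₗ[k] RV k n f :=
  (Submodule.mkQ (k ∙ f)) ∘ₗ mulX k n

/-- The map `V_{n-1} → V_n/⟨f⟩`, `g ↦ y·g + ⟨f⟩`. -/
def Rv (k : Type) [Field k] (n : ℕ) (f : Vd k n) : Vm k n →ₗ[k] RV k n f :=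
  (Submodule.mkQ (k ∙ f)) ∘ₗ mulY k n

/-- The quiver `|R(f)|`: vertices `V_n/⟨f⟩`, arrows `V_{n-1}`, start
`g ↦ x·g + ⟨f⟩`, terminus `g ↦ y·g + ⟨f⟩`. -/
abbrev RQuiv (k : Type) [Field k] (n : ℕ) (f : Vd k n) : Quiv where
  V := RV k n f
  A := Vm k n
  s := Ru k n f
  t := Rv k n f

end

noncomputable section
open MvPolynomial

/-- The polynomial `y^n - x^n` as an element of `V_n`. -/
def fCyc (k : Type) [Field k] (n : ℕ) : Vd k n :=
  ⟨(X 1 : Poly2 k) ^ n - (X 0 : Poly2 k) ^ n, by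
    refine Submodule.sub_mem _ ?_ ?_ <;>
      · rw [mem_homogeneousSubmodule]
        simpa using (isHomogeneous_X k _).pow n⟩

/-- The cyclic shift `σ : k^n → k^n`, `σ(e_i) = e_{i+1 (mod n)}`; as a map on
functions it is precomposition with `j ↦ j - 1 (mod n)`. -/
def cycShift (k : Type) [Field k] (n : ℕ) (hn : 0 < n) : (Fin n → k) →ₗ[k] (Fin n → k) :=
  LinearMap.funLeft k k (fun j : Fin n => ⟨(j.1 + (n - 1)) % n, Nat.mod_lt _ hn⟩)

open Module

section QuotientByLine

variable {K V : Type*} [Field K] [AddCommGroup V] [Module K V] {n : ℕ}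

theorem Module.Basis.injective_mkQ_comp_castSucc (b : Basis (Fin (n + 1)) K V) {f : V}
    (hf : b.repr f (Fin.last n) ≠ 0) :
    Function.Injective ((K ∙ f).mkQ ∘ₗ Fintype.linearCombination K (b ∘ Fin.castSucc)) := by
  rw [← LinearMap.ker_eq_bot, LinearMap.ker_eq_bot']
  intro c hc
  obtain ⟨a, ha⟩ := Submodule.mem_span_singleton.mp ((Submodule.Quotient.mk_eq_zero _).mp hc)
  have ha_zero : a = 0 := by
    have hlast : a * b.repr f (Fin.last n) = 0 := by
      simpa [Fintype.linearCombination_apply, Finsupp.single_apply, Fin.castSucc_ne_last]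
        using congrArg (fun v => b.repr v (Fin.last n)) ha
    exact (mul_eq_zero.mp hlast).resolve_right hf
  rw [ha_zero, zero_smul, eq_comm, Fintype.linearCombination_apply] at ha
  funext i
  exact Fintype.linearIndependent_iff.mp
    (b.linearIndependent.comp _ (Fin.castSucc_injective n)) c ha i

def Module.Basis.equivQuotientSpanSingleton (b : Basis (Fin (n + 1)) K V) (f : V)
    (hf : b.repr f (Fin.last n) ≠ 0) : (Fin n → K) ≃ₗ[K] V ⧸ K ∙ f :=
  have := b.finiteDimensional_of_finite
  have hf₀ : f ≠ 0 := by rintro rfl; simp at hf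
  LinearMap.linearEquivOfInjective _ (b.injective_mkQ_comp_castSucc hf) <| by
    rw [finrank_fin_fun, Submodule.finrank_quotient, finrank_span_singleton hf₀,
      finrank_eq_card_basis b, Fintype.card_fin, Nat.add_sub_cancel]

theorem Module.Basis.equivQuotientSpanSingleton_apply (b : Basis (Fin (n + 1)) K V) (f : V)
    (hf : b.repr f (Fin.last n) ≠ 0) (c : Fin n → K) :
    b.equivQuotientSpanSingleton f hf c = Submodule.Quotient.mk (∑ i, c i • b i.castSucc) :=
  rfl

end QuotientByLine

theorem MvPolynomial.basisRestrictSupport_apply {R σ : Type*} [CommSemiring R]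
    (s : Set (σ →₀ ℕ)) (d : s) :
    basisRestrictSupport R s d = ⟨monomial d 1, by simp⟩ := by
  classical
  rw [Basis.apply_eq_iff]
  ext e
  simp only [basisRestrictSupport, Finsupp.single_apply, Subtype.ext_iff]
  exact coeff_monomial (e : σ →₀ ℕ) (d : σ →₀ ℕ) (1 : R)

def finTwoDegreeEqEquiv (n : ℕ) : {d : Fin 2 →₀ ℕ // d.degree = n} ≃ Fin (n + 1) where
  toFun d := ⟨d.1 1, by have := d.2; rw [Finsupp.degree_eq_sum, Fin.sum_univ_two] at this; omega⟩
  invFun i := ⟨Finsupp.single 0 (n - i : ℕ) + Finsupp.single 1 (i : ℕ), by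
    rw [map_add, Finsupp.degree_single, Finsupp.degree_single]; omega⟩
  left_inv d := by
    obtain ⟨d, hd⟩ := d
    rw [Finsupp.degree_eq_sum, Fin.sum_univ_two] at hd
    refine Subtype.ext (Finsupp.ext (Fin.forall_fin_two.mpr ⟨?_, ?_⟩))
    · simp only [Finsupp.add_apply, Finsupp.single_eq_same, Finsupp.single_eq_of_ne zero_ne_one]
      omega
    · simp
  right_inv i := by ext; simp

section CyclicRepresentation

variable (k : Type) [Field k]

def homogBasis (n : ℕ) : Basis (Fin (n + 1)) k (Vd k n) :=
  ((basisRestrictSupport k {d | d.degree = n}).map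
    (LinearEquiv.ofEq (restrictSupport k _) _
      (homogeneousSubmodule_eq_finsupp_supported (Fin 2) k n).symm)).reindex
    (finTwoDegreeEqEquiv n)

theorem coe_homogBasis (n : ℕ) (i : Fin (n + 1)) :
    (homogBasis k n i : Poly2 k) = X 0 ^ (n - i : ℕ) * X 1 ^ (i : ℕ) := by
  rw [homogBasis, Basis.reindex_apply, Basis.map_apply, basisRestrictSupport_apply,
    X_pow_eq_monomial, X_pow_eq_monomial, monomial_mul, one_mul]
  rfl

theorem fCyc_eq_homogBasis (n : ℕ) :
    fCyc k n = homogBasis k n (Fin.last n) - homogBasis k n 0 := by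
  apply Subtype.ext
  simp [fCyc, coe_homogBasis]

variable (m : ℕ)

theorem homogBasis_repr_fCyc_last :
    (homogBasis k (m + 1)).repr (fCyc k (m + 1)) (Fin.last (m + 1)) = 1 := by
  simp [fCyc_eq_homogBasis]

theorem mulX_homogBasis (i : Fin (m + 1)) :
    mulX k (m + 1) (homogBasis k m i) = homogBasis k (m + 1) i.castSucc := by
  apply Subtype.ext
  change X 0 * (homogBasis k m i : Poly2 k) = _
  rw [coe_homogBasis, coe_homogBasis, Fin.val_castSucc, Nat.succ_sub i.is_le, pow_succ]
  ring

theorem mulY_homogBasis (i : Fin (m + 1)) :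
    mulY k (m + 1) (homogBasis k m i) = homogBasis k (m + 1) i.succ := by
  apply Subtype.ext
  change X 1 * (homogBasis k m i : Poly2 k) = _
  rw [coe_homogBasis, coe_homogBasis, Fin.val_succ, Nat.add_sub_add_right, pow_succ]
  ring

theorem mulX_homogBasis_equivFun_symm (c : Fin (m + 1) → k) :
    mulX k (m + 1) ((homogBasis k m).equivFun.symm c)
      = ∑ i, c i • homogBasis k (m + 1) i.castSucc := by
  rw [Basis.equivFun_symm_apply, map_sum]
  exact Finset.sum_congr rfl fun i _ => by rw [map_smul, mulX_homogBasis]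

theorem mulY_homogBasis_equivFun_symm (c : Fin (m + 1) → k) :
    mulY k (m + 1) ((homogBasis k m).equivFun.symm c)
      = ∑ i, c i • homogBasis k (m + 1) i.succ := by
  rw [Basis.equivFun_symm_apply, map_sum]
  exact Finset.sum_congr rfl fun i _ => by rw [map_smul, mulY_homogBasis]

theorem cycShift_apply_zero (hn : 0 < m + 1) (c : Fin (m + 1) → k) :
    cycShift k (m + 1) hn c 0 = c (Fin.last m) := by
  simp [cycShift, LinearMap.funLeft_apply, Fin.last]

theorem cycShift_apply_succ (hn : 0 < m + 1) (c : Fin (m + 1) → k) (i : Fin m) :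
    cycShift k (m + 1) hn c i.succ = c i.castSucc := by
  simp only [cycShift, LinearMap.funLeft_apply]
  congr 1
  ext
  simp only [Fin.val_succ, Nat.add_sub_cancel, Nat.add_right_comm _ 1, Nat.add_assoc,
    Nat.add_mod_right]
  exact Nat.mod_eq_of_lt (by omega)

theorem sum_cycShift_smul_castSucc_sub_sum_smul_succ (hn : 0 < m + 1) (c : Fin (m + 1) → k) :
    ∑ j, cycShift k (m + 1) hn c j • homogBasis k (m + 1) j.castSucc
      - ∑ i, c i • homogBasis k (m + 1) i.succ = -c (Fin.last m) • fCyc k (m + 1) := by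
  rw [Fin.sum_univ_succ, Fin.sum_univ_castSucc (n := m)]
  simp only [cycShift_apply_zero, cycShift_apply_succ, Fin.succ_castSucc, Fin.succ_last,
    fCyc_eq_homogBasis, Fin.castSucc_zero]
  module

end CyclicRepresentation

/-- the linearization `k^{(C_n)}` of the cyclic quiver `C_n`,
given by the identity and the cyclic shift `σ`, is isomorphic as a Kronecker
representation to `R(y^n - x^n)`. -/
theorem stmt9 (k : Type) [Field k] (n : ℕ) (hn : 0 < n) :
    ∃ (ψ₁ : (Fin n → k) ≃ₗ[k] Vm k n)
      (ψ₀ : (Fin n → k) ≃ₗ[k] RV k n (fCyc k n)),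
      (∀ c : Fin n → k, ψ₀ c = Ru k n (fCyc k n) (ψ₁ c)) ∧
      (∀ c : Fin n → k, ψ₀ (cycShift k n hn c) = Rv k n (fCyc k n) (ψ₁ c)) := by
  obtain ⟨m, rfl⟩ := Nat.exists_eq_add_one_of_ne_zero hn.ne'
  refine ⟨(homogBasis k m).equivFun.symm, (homogBasis k (m + 1)).equivQuotientSpanSingleton _
    (homogBasis_repr_fCyc_last k m ▸ one_ne_zero), fun c => ?_, fun c => ?_⟩
  · rw [Basis.equivQuotientSpanSingleton_apply, Ru, LinearMap.comp_apply,
      mulX_homogBasis_equivFun_symm, Submodule.mkQ_apply]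
  · rw [Basis.equivQuotientSpanSingleton_apply, Rv, LinearMap.comp_apply,
      mulY_homogBasis_equivFun_symm, Submodule.mkQ_apply, Submodule.Quotient.eq,
      sum_cycShift_smul_castSucc_sub_sum_smul_succ]
    exact Submodule.smul_mem _ _ (Submodule.mem_span_singleton_self _)

end
end

section
/- Let k be a field, let a, b ≥ 1, and let f ∈ V_a and g ∈ V_b be nonzero homogeneous polynomials that are coprime (they have no common irreducible factor in k[x,y]). Then R(f·g) is isomorphic as a Kronecker representation to the direct sum R(f) ⊕ R(g); that is, there exist k-linear isomorphisms V_{a+b−1} ≅ V_{a−1} × V_{b−1} and V_{a+b}/⟨fg⟩ ≅ (V_a/⟨f⟩) × (V_b/⟨g⟩) intertwining the maps induced by multiplication by x and the maps induced by multiplication by y. -/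
open MvPolynomial

noncomputable section
open MvPolynomial

/-- The product `f·g ∈ V_{a+b}` of `f ∈ V_a` and `g ∈ V_b`. -/
def mulVd (k : Type) [Field k] {a b : ℕ} (f : Vd k a) (g : Vd k b) : Vd k (a + b) :=
  ⟨(f : Poly2 k) * (g : Poly2 k), by
    rw [mem_homogeneousSubmodule]
    exact ((mem_homogeneousSubmodule a (f : Poly2 k)).1 f.2).mul
      ((mem_homogeneousSubmodule b (g : Poly2 k)).1 g.2)⟩

/-! The Sylvester map `(p, q) ↦ p g + f q` sends `V_{a-1} × V_{b-1}` to `V_{a+b-1}` and induces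
`V_a/⟨f⟩ × V_b/⟨g⟩ → V_{a+b}/⟨f g⟩`; being multiplication by fixed polynomials, both commute
with multiplication by `x` and by `y`. Coprimality makes both injective: if `p g + f q` is a
multiple of `f g` then `f ∣ p`, which by degrees forces `p = 0` (resp. `p ∈ ⟨f⟩`), and then `q` is
determined. In both cases source and target have dimension `a + b`, so both maps are isomorphisms.
-/

theorem MvPolynomial.finrank_homogeneousSubmodule {σ R : Type*} [CommRing R]
    [StrongRankCondition R] (n : ℕ) :
    Module.finrank R (homogeneousSubmodule σ R n) = (Nat.card σ).multichoose n := by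
  classical
  rw [homogeneousSubmodule_eq_finsupp_supported, ← Sym.natCard_sym_eq_multichoose]
  exact (Module.finrank_eq_nat_card_basis (basisRestrictSupport R _)).trans
    (Nat.card_congr (Sym.equivNatSum σ n).symm)

namespace MvPolynomial.IsHomogeneous

variable {σ R : Type*} [CommRing R] [IsDomain R] {f p : MvPolynomial σ R} {m n : ℕ}

theorem eq_zero_of_dvd_of_lt (hf : f.IsHomogeneous m) (hp : p.IsHomogeneous n) (hnm : n < m)
    (hfp : f ∣ p) : p = 0 := by
  by_contra hp0
  have hf0 : f ≠ 0 := by rintro rfl; exact hp0 (zero_dvd_iff.1 hfp)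
  have := totalDegree_le_of_dvd_of_isDomain hfp hp0
  rw [hf.totalDegree hf0, hp.totalDegree hp0] at this
  omega

theorem exists_eq_C_mul_of_dvd (hf : f.IsHomogeneous n) (hp : p.IsHomogeneous n)
    (hfp : f ∣ p) : ∃ r, p = C r * f := by
  obtain ⟨c, rfl⟩ := hfp
  by_cases hf0 : f = 0
  · exact ⟨0, by simp [hf0]⟩
  by_cases hc0 : c = 0
  · exact ⟨0, by simp [hc0]⟩
  have hdeg := totalDegree_mul_of_isDomain hf0 hc0
  rw [hf.totalDegree hf0, hp.totalDegree (mul_ne_zero hf0 hc0), left_eq_add,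
    totalDegree_eq_zero_iff_eq_C] at hdeg
  exact ⟨coeff 0 c, by rw [mul_comm, ← hdeg]⟩

end MvPolynomial.IsHomogeneous

section Sylvester

variable {k : Type} [Field k] {a b : ℕ}

instance (n : ℕ) : FiniteDimensional k (Vd k n) :=
  Module.Finite.iff_fg.2 (homogeneousSubmodule_fg _ _ n)

instance (n : ℕ) : FiniteDimensional k (Vm k n) := by
  cases n <;> infer_instance

theorem finrank_Vd (n : ℕ) : Module.finrank k (Vd k n) = n + 1 := by
  rw [finrank_homogeneousSubmodule, Nat.card_eq_fintype_card, Fintype.card_fin,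
    Nat.multichoose_two]

theorem finrank_Vm (n : ℕ) : Module.finrank k (Vm k n) = n := by
  cases n with
  | zero => exact finrank_bot k _
  | succ n => exact finrank_Vd n

theorem finrank_RV {n : ℕ} {f : Vd k n} (hf : f ≠ 0) : Module.finrank k (RV k n f) = n := by
  have := Submodule.finrank_quotient_add_finrank (k ∙ f)
  rw [finrank_span_singleton hf, finrank_Vd] at this
  exact Nat.add_right_cancel this

theorem mem_span_singleton_Vd {n : ℕ} {f p : Vd k n} :
    p ∈ k ∙ f ↔ ∃ r, (p : Poly2 k) = C r * (f : Poly2 k) := by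
  simp only [Submodule.mem_span_singleton, Subtype.ext_iff, SetLike.val_smul, smul_eq_C_mul,
    eq_comm]

theorem mul_mem_Vm {m n : ℕ} {c p : Poly2 k} (hc : c ∈ Vd k m) (hp : p ∈ Vm k n) :
    c * p ∈ Vm k (m + n) := by
  cases n with
  | zero => simp_all
  | succ n => exact IsHomogeneous.mul hc hp

theorem eq_zero_of_dvd_of_mem_Vm {n : ℕ} {f p : Poly2 k} (hf : f ∈ Vd k n) (hp : p ∈ Vm k n)
    (hfp : f ∣ p) : p = 0 := by
  cases n with
  | zero => simpa using hp
  | succ n => exact IsHomogeneous.eq_zero_of_dvd_of_lt hf hp n.lt_succ_self hfp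

def sylvesterMap (f : Vd k a) (g : Vd k b) : Vm k a × Vm k b →ₗ[k] Vm k (a + b) :=
  LinearMap.coprod
    ((LinearMap.mulRight k (g : Poly2 k)).restrict fun p hp =>
      show p * g ∈ Vm k (a + b) by rw [mul_comm, add_comm]; exact mul_mem_Vm g.2 hp)
    ((LinearMap.mulLeft k (f : Poly2 k)).restrict fun _ hq => mul_mem_Vm f.2 hq)

def sylvesterQuotMap (f : Vd k a) (g : Vd k b) :
    RV k a f × RV k b g →ₗ[k] RV k (a + b) (mulVd k f g) :=
  LinearMap.coprod
    (Submodule.mapQ _ _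
      ((LinearMap.mulRight k (g : Poly2 k)).restrict fun _ hp => IsHomogeneous.mul hp g.2)
      ((Submodule.span_singleton_le_iff_mem _ _).2 (Submodule.mem_span_singleton_self _)))
    (Submodule.mapQ _ _
      ((LinearMap.mulLeft k (f : Poly2 k)).restrict fun _ hq => IsHomogeneous.mul f.2 hq)
      ((Submodule.span_singleton_le_iff_mem _ _).2 (Submodule.mem_span_singleton_self _)))

theorem sylvesterQuotMap_mk (f : Vd k a) (g : Vd k b) (P : Vd k a) (Q : Vd k b) :
    sylvesterQuotMap f g (Submodule.Quotient.mk P, Submodule.Quotient.mk Q) =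
      Submodule.Quotient.mk (mulVd k P g + mulVd k f Q) :=
  rfl

theorem sylvesterQuotMap_mulVar (f : Vd k a) (g : Vd k b) (j : Fin 2) (pq : Vm k a × Vm k b) :
    sylvesterQuotMap f g ((k ∙ f).mkQ (mulVar k a j pq.1), (k ∙ g).mkQ (mulVar k b j pq.2)) =
      (k ∙ mulVd k f g).mkQ (mulVar k (a + b) j (sylvesterMap f g pq)) := by
  refine (sylvesterQuotMap_mk f g _ _).trans (congrArg _ (Subtype.ext ?_))
  change X j * (pq.1 : Poly2 k) * (g : Poly2 k) + (f : Poly2 k) * (X j * (pq.2 : Poly2 k)) =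
    X j * ((pq.1 : Poly2 k) * (g : Poly2 k) + (f : Poly2 k) * (pq.2 : Poly2 k))
  ring

theorem sylvesterMap_injective {f : Vd k a} {g : Vd k b} (hf : f ≠ 0)
    (hfg : IsRelPrime (f : Poly2 k) g) : Function.Injective (sylvesterMap f g) := by
  rw [injective_iff_map_eq_zero]
  rintro ⟨p, q⟩ h
  have h' : (p : Poly2 k) * g + f * q = 0 := congrArg Subtype.val h
  have hp : (p : Poly2 k) = 0 := eq_zero_of_dvd_of_mem_Vm f.2 p.2
    (hfg.dvd_of_dvd_mul_right ⟨-q, by linear_combination h'⟩)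
  rw [hp, zero_mul, zero_add] at h'
  have hq : (q : Poly2 k) = 0 := (mul_eq_zero.1 h').resolve_left (Subtype.coe_ne_coe.2 hf)
  exact Prod.ext (Subtype.ext hp) (Subtype.ext hq)

theorem sylvesterQuotMap_injective {f : Vd k a} {g : Vd k b} (hf : f ≠ 0)
    (hfg : IsRelPrime (f : Poly2 k) g) : Function.Injective (sylvesterQuotMap f g) := by
  rw [injective_iff_map_eq_zero]
  rintro ⟨P', Q'⟩ h
  obtain ⟨P, rfl⟩ := Submodule.Quotient.mk_surjective _ P'
  obtain ⟨Q, rfl⟩ := Submodule.Quotient.mk_surjective _ Q'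
  rw [sylvesterQuotMap_mk, Submodule.Quotient.mk_eq_zero, mem_span_singleton_Vd] at h
  obtain ⟨c, hc⟩ := h
  change (P : Poly2 k) * (g : Poly2 k) + (f : Poly2 k) * (Q : Poly2 k) =
    C c * ((f : Poly2 k) * (g : Poly2 k)) at hc
  obtain ⟨r, hr⟩ := IsHomogeneous.exists_eq_C_mul_of_dvd f.2 P.2
    (hfg.dvd_of_dvd_mul_right ⟨C c * (g : Poly2 k) - (Q : Poly2 k), by linear_combination hc⟩)
  have hQ : (Q : Poly2 k) = C (c - r) * (g : Poly2 k) := by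
    refine mul_left_cancel₀ (Subtype.coe_ne_coe.2 hf) ?_
    rw [map_sub]
    linear_combination hc - (g : Poly2 k) * hr
  simp only [Prod.mk_eq_zero, Submodule.Quotient.mk_eq_zero, mem_span_singleton_Vd]
  exact ⟨⟨r, hr⟩, ⟨c - r, hQ⟩⟩

theorem mulVd_ne_zero {f : Vd k a} {g : Vd k b} (hf : f ≠ 0) (hg : g ≠ 0) : mulVd k f g ≠ 0 :=
  fun h => mul_ne_zero (Subtype.coe_ne_coe.2 hf) (Subtype.coe_ne_coe.2 hg) (congrArg Subtype.val h)

def sylvesterEquiv {f : Vd k a} {g : Vd k b} (hf : f ≠ 0) (hfg : IsRelPrime (f : Poly2 k) g) :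
    (Vm k a × Vm k b) ≃ₗ[k] Vm k (a + b) :=
  (sylvesterMap f g).linearEquivOfInjective (sylvesterMap_injective hf hfg) <| by
    rw [Module.finrank_prod, finrank_Vm, finrank_Vm, finrank_Vm]

def sylvesterQuotEquiv {f : Vd k a} {g : Vd k b} (hf : f ≠ 0) (hg : g ≠ 0)
    (hfg : IsRelPrime (f : Poly2 k) g) :
    (RV k a f × RV k b g) ≃ₗ[k] RV k (a + b) (mulVd k f g) :=
  (sylvesterQuotMap f g).linearEquivOfInjective (sylvesterQuotMap_injective hf hfg) <| by
    rw [Module.finrank_prod, finrank_RV hf, finrank_RV hg, finrank_RV (mulVd_ne_zero hf hg)]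

end Sylvester

theorem stmt11_general (k : Type) [Field k] (a b : ℕ)
    (f : Vd k a) (g : Vd k b) (hf : f ≠ 0) (hg : g ≠ 0)
    (hcop : ∀ q : Poly2 k, Irreducible q →
      ¬ (q ∣ (f : Poly2 k) ∧ q ∣ (g : Poly2 k))) :
    ∃ (ψ₁ : Vm k (a + b) ≃ₗ[k] (Vm k a × Vm k b))
      (ψ₀ : RV k (a + b) (mulVd k f g) ≃ₗ[k] (RV k a f × RV k b g)),
      (∀ h : Vm k (a + b),
        ψ₀ (Ru k (a + b) (mulVd k f g) h)
          = (Ru k a f (ψ₁ h).1, Ru k b g (ψ₁ h).2)) ∧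
      (∀ h : Vm k (a + b),
        ψ₀ (Rv k (a + b) (mulVd k f g) h)
          = (Rv k a f (ψ₁ h).1, Rv k b g (ψ₁ h).2)) := by
  have hfg : IsRelPrime (f : Poly2 k) g :=
    WfDvdMonoid.isRelPrime_of_no_irreducible_factors (fun h => hf (Subtype.ext h.1))
      fun q hq hqf hqg => hcop q hq ⟨hqf, hqg⟩
  let Φ₁ := sylvesterEquiv hf hfg
  let Φ₀ := sylvesterQuotEquiv hf hg hfg
  have intertwine (j : Fin 2) (h : Vm k (a + b)) :
      Φ₀.symm ((k ∙ mulVd k f g).mkQ (mulVar k (a + b) j h)) =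
        ((k ∙ f).mkQ (mulVar k a j (Φ₁.symm h).1),
          (k ∙ g).mkQ (mulVar k b j (Φ₁.symm h).2)) := by
    obtain ⟨pq, rfl⟩ := Φ₁.surjective h
    rw [LinearEquiv.symm_apply_apply, LinearEquiv.symm_apply_eq]
    exact (sylvesterQuotMap_mulVar f g j pq).symm
  exact ⟨Φ₁.symm, Φ₀.symm, intertwine 0, intertwine 1⟩

/-- for coprime nonzero `f ∈ V_a`, `g ∈ V_b` (no common
irreducible factor), `R(f·g)` is isomorphic as a Kronecker representation to
`R(f) ⊕ R(g)`. -/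
theorem stmt11 (k : Type) [Field k] (a b : ℕ) (ha : 1 ≤ a) (hb : 1 ≤ b)
    (f : Vd k a) (g : Vd k b) (hf : f ≠ 0) (hg : g ≠ 0)
    (hcop : ∀ q : Poly2 k, Irreducible q →
      ¬ (q ∣ (f : Poly2 k) ∧ q ∣ (g : Poly2 k))) :
    ∃ (ψ₁ : Vm k (a + b) ≃ₗ[k] (Vm k a × Vm k b))
      (ψ₀ : RV k (a + b) (mulVd k f g) ≃ₗ[k] (RV k a f × RV k b g)),
      (∀ h : Vm k (a + b),
        ψ₀ (Ru k (a + b) (mulVd k f g) h)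
          = (Ru k a f (ψ₁ h).1, Ru k b g (ψ₁ h).2)) ∧
      (∀ h : Vm k (a + b),
        ψ₀ (Rv k (a + b) (mulVd k f g) h)
          = (Rv k a f (ψ₁ h).1, Rv k b g (ψ₁ h).2)) :=
  stmt11_general k a b f g hf hg hcop

end
end

section
/- Let k be a field, let p be an irreducible homogeneous polynomial in x, y over k, let d ≥ 1 and set f = p^d ∈ V_n. Suppose the map u : V_{n−1} → V_n/⟨f⟩, g ↦ x·g + ⟨f⟩, is bijective and the map v : V_{n−1} → V_n/⟨f⟩, g ↦ y·g + ⟨f⟩, is not bijective. Then the endomorphism v ∘ u^{−1} of V_n/⟨f⟩ is nilpotent of index exactly d, i.e. (v ∘ u^{−1})^d = 0 and (v ∘ u^{−1})^{d−1} ≠ 0. -/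
open MvPolynomial

/-!
Since `u` is bijective, `V_{n-1}` and `V_n/⟨f⟩` have the same dimension, so `v` is not
injective: `y·g ∈ ⟨f⟩` for some `g ≠ 0`. Hence `y ∣ p^d`, so `p = c·y` and `f = c^d·y^d` with
`n = d`. The operator `A = v ∘ u⁻¹` sends the class of `x·P` to that of `y·P`, so `A^a` sends
the class of `x^a y^b` to that of `y^(a+b)`. For `a + b = d` this is the class of `y^d`, which
vanishes, so `A^d = 0`; while `A^(d-1)` sends `x^d` to `x·y^(d-1) ∉ ⟨y^d⟩`.
-/
namespace MvPolynomial

attribute [local instance] gradedAlgebra in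
theorem homogeneousComponent_X_mul {σ R : Type*} [CommSemiring R] (i : σ) (m : ℕ)
    (P : MvPolynomial σ R) :
    homogeneousComponent (m + 1) (X i * P) = X i * homogeneousComponent m P := by
  rw [← decomposition.decompose'_apply, ← decomposition.decompose'_apply, add_comm]
  exact DirectSum.coe_decompose_mul_add_of_left_mem (homogeneousSubmodule σ R)
    ((mem_homogeneousSubmodule 1 _).mpr (isHomogeneous_X R i))

theorem eq_C_mul_X_of_irreducible_of_X_dvd {σ K : Type*} [Field K] {p : MvPolynomial σ K}
    (hp : Irreducible p) {i : σ} (h : X i ∣ p) : ∃ c : K, c ≠ 0 ∧ p = C c * X i := by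
  obtain ⟨u, hu⟩ := X_prime.irreducible.associated_of_dvd hp h
  obtain ⟨c, hc, hcu⟩ := (isUnit_iff_eq_C_of_isReduced).mp u.isUnit
  exact ⟨c, hc.ne_zero, by rw [← hu, hcu, mul_comm]⟩

end MvPolynomial

instance Vd.finiteDimensional (k : Type) [Field k] (n : ℕ) : FiniteDimensional k (Vd k n) :=
  Module.Finite.iff_fg.mpr (homogeneousSubmodule_fg _ _ n)

instance Vm.finiteDimensional (k : Type) [Field k] (n : ℕ) : FiniteDimensional k (Vm k n) := by
  cases n <;> infer_instance

theorem X_one_dvd_of_not_bijective_Rv {k : Type} [Field k] {n : ℕ} {f : Vd k n}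
    (hu : Function.Bijective (Ru k n f)) (hv : ¬ Function.Bijective (Rv k n f)) :
    X 1 ∣ (f : Poly2 k) := by
  have hinj : ¬ Function.Injective (Rv k n f) := fun hinj => hv ⟨hinj,
    (LinearMap.injective_iff_surjective_of_finrank_eq_finrank
      (LinearEquiv.ofBijective (Ru k n f) hu).finrank_eq).mp hinj⟩
  obtain ⟨g, hg, hg0⟩ := (Submodule.ne_bot_iff _).mp (mt LinearMap.ker_eq_bot.mp hinj)
  obtain ⟨a, ha⟩ := Submodule.mem_span_singleton.mp
    ((Submodule.Quotient.mk_eq_zero _).mp (LinearMap.mem_ker.mp hg))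
  have ha' : a • (f : Poly2 k) = X 1 * (g : Poly2 k) := congrArg Subtype.val ha
  have ha0 : a ≠ 0 := by
    rintro rfl
    refine hg0 (Subtype.ext ((mul_eq_zero.mp ?_).resolve_left (X_ne_zero 1)))
    rw [← ha', zero_smul]
  exact ⟨a⁻¹ • (g : Poly2 k), by rw [mul_smul_comm, ← ha', inv_smul_smul₀ ha0]⟩

section QuotientClass

variable (k : Type) [Field k] (n : ℕ) (f : Vd k n)

/-- Defined on all polynomials, through their degree-`n` part, so that `v ∘ u⁻¹` acts as
multiplication by `y/x` without degree bookkeeping. -/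
noncomputable def toRV : Poly2 k →ₗ[k] RV k n f :=
  (k ∙ f).mkQ ∘ₗ (homogeneousComponent n).codRestrict (Vd k n) (homogeneousComponent_mem n)

variable {k n f}

theorem toRV_apply (P : Poly2 k) :
    toRV k n f P = (k ∙ f).mkQ ⟨homogeneousComponent n P, homogeneousComponent_mem n P⟩ :=
  rfl

theorem toRV_of_mem {h : Poly2 k} (hh : h ∈ Vd k n) : toRV k n f h = (k ∙ f).mkQ ⟨h, hh⟩ := by
  rw [toRV_apply]
  congr 1
  exact Subtype.ext (homogeneousComponent_eq_self hh)

theorem toRV_surjective : Function.Surjective (toRV k n f) := by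
  intro z
  obtain ⟨h, rfl⟩ := (k ∙ f).mkQ_surjective z
  exact ⟨h, toRV_of_mem h.2⟩

theorem toRV_eq_zero_iff {h : Poly2 k} (hh : h ∈ Vd k n) :
    toRV k n f h = 0 ↔ ∃ a : k, a • (f : Poly2 k) = h := by
  rw [toRV_of_mem hh, Submodule.mkQ_apply, Submodule.Quotient.mk_eq_zero,
    Submodule.mem_span_singleton]
  simp only [Subtype.ext_iff, Submodule.coe_smul]

theorem toRV_eq_zero_of_isHomogeneous {h : Poly2 k} {m : ℕ} (hh : h.IsHomogeneous m)
    (hm : m ≠ n) : toRV k n f h = 0 := by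
  rw [toRV_apply, ← map_zero (k ∙ f).mkQ]
  congr 1
  exact Subtype.ext (by simp [homogeneousComponent_of_mem hh, hm.symm])

theorem toRV_X_mul {m : ℕ} {f : Vd k (m + 1)} (i : Fin 2) (P : Poly2 k) :
    toRV k (m + 1) f (X i * P) =
      (k ∙ f).mkQ
        (mulVar k (m + 1) i ⟨homogeneousComponent m P, homogeneousComponent_mem m P⟩) := by
  rw [toRV_apply]
  congr 1
  exact Subtype.ext (homogeneousComponent_X_mul i m P)

end QuotientClass

section ShiftOperator

variable {k : Type} [Field k] {m : ℕ} {f : Vd k (m + 1)} {A : Module.End k (RV k (m + 1) f)}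

theorem apply_toRV_X_zero_mul (hA : ∀ g, A (Ru k (m + 1) f g) = Rv k (m + 1) f g)
    (P : Poly2 k) : A (toRV k (m + 1) f (X 0 * P)) = toRV k (m + 1) f (X 1 * P) := by
  rw [toRV_X_mul, toRV_X_mul]
  exact hA _

theorem pow_apply_toRV_X_zero_pow_mul (hA : ∀ g, A (Ru k (m + 1) f g) = Rv k (m + 1) f g)
    (j : ℕ) (P : Poly2 k) :
    (A ^ j) (toRV k (m + 1) f (X 0 ^ j * P)) = toRV k (m + 1) f (X 1 ^ j * P) := by
  induction j generalizing P with
  | zero => simp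
  | succ j ih =>
    rw [pow_succ A, Module.End.mul_apply, pow_succ', mul_assoc, apply_toRV_X_zero_mul hA,
      mul_left_comm, ih, ← mul_assoc, ← pow_succ]

theorem pow_eq_zero_of_toRV_X_one_pow (hA : ∀ g, A (Ru k (m + 1) f g) = Rv k (m + 1) f g)
    (hf : toRV k (m + 1) f (X 1 ^ (m + 1)) = 0) : A ^ (m + 1) = 0 := by
  suffices (A ^ (m + 1)) ∘ₗ toRV k (m + 1) f = 0 from LinearMap.ext fun z => by
    obtain ⟨P, rfl⟩ := toRV_surjective z
    exact LinearMap.congr_fun this P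
  refine (basisMonomials (Fin 2) k).ext fun s => ?_
  have hs : (basisMonomials (Fin 2) k s : Poly2 k) = X 0 ^ s 0 * X 1 ^ s 1 := by
    change monomial s (1 : k) = _
    rw [monomial_eq, C_1, one_mul, Finsupp.prod_fintype _ _ (by simp),
      Fin.prod_univ_two]
  rw [LinearMap.comp_apply, hs, LinearMap.zero_apply]
  by_cases h0 : s 0 ≤ m + 1
  · rw [show A ^ (m + 1) = A ^ (m + 1 - s 0) * A ^ s 0 by rw [← pow_add, Nat.sub_add_cancel h0],
      Module.End.mul_apply, pow_apply_toRV_X_zero_pow_mul hA, ← pow_add]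
    rcases eq_or_ne (s 0 + s 1) (m + 1) with h | h
    · rw [h, hf, map_zero]
    · rw [toRV_eq_zero_of_isHomogeneous (isHomogeneous_X_pow 1 _) h, map_zero]
  · rw [toRV_eq_zero_of_isHomogeneous ((isHomogeneous_X_pow 0 _).mul (isHomogeneous_X_pow 1 _))
      (by omega), map_zero]

theorem pow_ne_zero_of_toRV_X_one_pow_mul_X_zero
    (hA : ∀ g, A (Ru k (m + 1) f g) = Rv k (m + 1) f g)
    (hf : toRV k (m + 1) f (X 1 ^ m * X 0) ≠ 0) : A ^ m ≠ 0 := fun h =>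
  hf (by rw [← pow_apply_toRV_X_zero_pow_mul hA, h, LinearMap.zero_apply])

theorem toRV_X_one_pow_eq_zero {c : k} (hc : c ≠ 0) (hf : (f : Poly2 k) = C c * X 1 ^ (m + 1)) :
    toRV k (m + 1) f (X 1 ^ (m + 1)) = 0 :=
  (toRV_eq_zero_iff (isHomogeneous_X_pow 1 _)).mpr ⟨c⁻¹, by
    rw [hf, smul_eq_C_mul, ← mul_assoc, ← C_mul, inv_mul_cancel₀ hc, C_1, one_mul]⟩

theorem toRV_X_one_pow_mul_X_zero_ne_zero (hf : X 1 ^ (m + 1) ∣ (f : Poly2 k)) :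
    toRV k (m + 1) f (X 1 ^ m * X 0) ≠ 0 := by
  rw [Ne, toRV_eq_zero_iff ((isHomogeneous_X_pow 1 m).mul (isHomogeneous_X k 0))]
  rintro ⟨a, ha⟩
  have : X 1 ^ m * X 1 ∣ X 1 ^ m * (X 0 : Poly2 k) := by
    rw [← pow_succ, ← ha, smul_eq_C_mul]
    exact dvd_mul_of_dvd_right hf _
  exact X_dvd_X.not.mpr (by decide) ((mul_dvd_mul_iff_left (pow_ne_zero _ (X_ne_zero 1))).mp this)

end ShiftOperator

theorem stmt13_general (k : Type) [Field k]
    (p : Poly2 k) (hp_irr : Irreducible p)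
    (d : ℕ) (hd : 1 ≤ d) (n : ℕ) (f : Vd k n) (hf : (f : Poly2 k) = p ^ d)
    (hu : Function.Bijective (Ru k n f))
    (hv : ¬ Function.Bijective (Rv k n f)) :
    ((Rv k n f) ∘ₗ ((LinearEquiv.ofBijective (Ru k n f) hu).symm :
        RV k n f →ₗ[k] Vm k n)) ^ d = 0 ∧
    ((Rv k n f) ∘ₗ ((LinearEquiv.ofBijective (Ru k n f) hu).symm :
        RV k n f →ₗ[k] Vm k n)) ^ (d - 1) ≠ 0 := by
  obtain ⟨c, hc, rfl⟩ := eq_C_mul_X_of_irreducible_of_X_dvd hp_irr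
    (X_prime.dvd_of_dvd_pow (hf ▸ X_one_dvd_of_not_bijective_Rv hu hv))
  obtain ⟨m, rfl⟩ : ∃ m, d = m + 1 := ⟨d - 1, by omega⟩
  have hfX : (f : Poly2 k) = C (c ^ (m + 1)) * X 1 ^ (m + 1) := by rw [hf, mul_pow, C_pow]
  obtain rfl : n = m + 1 := f.2.inj_right (hfX ▸ (isHomogeneous_X_pow 1 _).C_mul _)
    (hfX ▸ mul_ne_zero (C_ne_zero.mpr (pow_ne_zero _ hc)) (pow_ne_zero _ (X_ne_zero 1)))
  set A : Module.End k (RV k (m + 1) f) :=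
    Rv k (m + 1) f ∘ₗ ((LinearEquiv.ofBijective (Ru k (m + 1) f) hu).symm :
      RV k (m + 1) f →ₗ[k] Vm k (m + 1))
  have hA : ∀ g, A (Ru k (m + 1) f g) = Rv k (m + 1) f g := fun g => by
    simp only [A, LinearMap.comp_apply, LinearEquiv.coe_coe,
      LinearEquiv.ofBijective_symm_apply_apply]
  refine ⟨pow_eq_zero_of_toRV_X_one_pow hA (toRV_X_one_pow_eq_zero (pow_ne_zero _ hc) hfX), ?_⟩
  rw [Nat.add_sub_cancel]
  exact pow_ne_zero_of_toRV_X_one_pow_mul_X_zero hA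
    (toRV_X_one_pow_mul_X_zero_ne_zero (hfX ▸ dvd_mul_left _ _))

/-- for `f = p^d` with `p` irreducible homogeneous, if
`u : g ↦ x·g + ⟨f⟩` is bijective and `v : g ↦ y·g + ⟨f⟩` is not, then the
endomorphism `v ∘ u⁻¹` of `V_n/⟨f⟩` is nilpotent of index exactly `d`. -/
theorem stmt13 (k : Type) [Field k]
    (p : Poly2 k) (hp_irr : Irreducible p) (e : ℕ) (hp_hom : p.IsHomogeneous e)
    (d : ℕ) (hd : 1 ≤ d) (n : ℕ) (f : Vd k n) (hf : (f : Poly2 k) = p ^ d)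
    (hu : Function.Bijective (Ru k n f))
    (hv : ¬ Function.Bijective (Rv k n f)) :
    ((Rv k n f) ∘ₗ ((LinearEquiv.ofBijective (Ru k n f) hu).symm :
        RV k n f →ₗ[k] Vm k n)) ^ d = 0 ∧
    ((Rv k n f) ∘ₗ ((LinearEquiv.ofBijective (Ru k n f) hu).symm :
        RV k n f →ₗ[k] Vm k n)) ^ (d - 1) ≠ 0 :=
  stmt13_general k p hp_irr d hd n f hf hu hv
end
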